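/- The Aronsson function u(x, y) = |x|^{4/3} − |y|^{4/3} on ℝ² satisfies Δ_∞ u(x,y) = 0 at every point (x,y) with x ≠ 0 and y ≠ 0; i.e., u is infinity harmonic away from the coordinate axes. -/

import Mathlib

/-!
For a separable function `u(q) = ∑ᵢ fᵢ(qᵢ)` the Hessian is diagonal, so the numerator of `Δ_∞ u`
is `∑ᵢ fᵢ'² fᵢ''`. For `f(t) = |t|^r` and `t ≠ 0` one has `f'² f'' = r³ (r - 1) |t|^(3r - 4)`,
which is the constant `64/81` exactly when `r = 4/3`; hence the contributions of `|x|^{4/3}` and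
`-|y|^{4/3}` cancel.
-/

open Matrix

noncomputable section

/-- Outer product `v ⊗ w = v wᵀ` as a matrix. -/
def outer {d : ℕ} (v w : EuclideanSpace ℝ (Fin d)) : Matrix (Fin d) (Fin d) ℝ :=
  fun i j => v i * w j

/-- Frobenius inner product `⟨X, Y⟩_F = tr(Xᵀ Y)`. -/
def frob {d : ℕ} (X Y : Matrix (Fin d) (Fin d) ℝ) : ℝ := (Xᵀ * Y).trace

/-- Hessian matrix `D²u(x)` of `u` at `x`. -/
def hess {d : ℕ} (u : EuclideanSpace ℝ (Fin d) → ℝ) (x : EuclideanSpace ℝ (Fin d)) :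
    Matrix (Fin d) (Fin d) ℝ :=
  fun i j =>
    fderiv ℝ (fun y => fderiv ℝ u y (EuclideanSpace.single j 1)) x (EuclideanSpace.single i 1)

/-- The infinity Laplacian `Δ_∞ u (x) = ⟨∇u ⊗ ∇u, D²u⟩_F / ‖∇u‖²`. -/
def infLap {d : ℕ} (u : EuclideanSpace ℝ (Fin d) → ℝ) (x : EuclideanSpace ℝ (Fin d)) : ℝ :=
  frob (outer (gradient u x) (gradient u x)) (hess u x) / ‖gradient u x‖ ^ 2

open Filter Topology

section SeparableSum

variable {d : ℕ}

theorem gradient_apply_eq_fderiv (u : EuclideanSpace ℝ (Fin d) → ℝ)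
    (p : EuclideanSpace ℝ (Fin d)) (i : Fin d) :
    gradient u p i = fderiv ℝ u p (EuclideanSpace.single i 1) := by
  rw [← inner_gradient_left, EuclideanSpace.inner_single_right]
  simp

theorem frob_outer_self_diagonal (v : EuclideanSpace ℝ (Fin d)) (c : Fin d → ℝ) :
    frob (outer v v) (diagonal c) = ∑ i, v i ^ 2 * c i := by
  simp [frob, outer, Matrix.trace, Matrix.mul_apply, Matrix.diagonal_apply, sq]

variable {f f' : Fin d → ℝ → ℝ} {q : EuclideanSpace ℝ (Fin d)}

theorem hasFDerivAt_sum_comp_coord (hf : ∀ i, HasDerivAt (f i) (f' i (q i)) (q i)) :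
    HasFDerivAt (fun y : EuclideanSpace ℝ (Fin d) => ∑ i, f i (y i))
      (∑ i, f' i (q i) • EuclideanSpace.proj (𝕜 := ℝ) i) q :=
  HasFDerivAt.fun_sum fun i _ =>
    (hf i).comp_hasFDerivAt q (EuclideanSpace.proj (𝕜 := ℝ) i).hasFDerivAt

theorem fderiv_sum_comp_coord_single (hf : ∀ i, HasDerivAt (f i) (f' i (q i)) (q i))
    (j : Fin d) :
    fderiv ℝ (fun y : EuclideanSpace ℝ (Fin d) => ∑ i, f i (y i)) q
      (EuclideanSpace.single j 1) = f' j (q j) := by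
  simp [(hasFDerivAt_sum_comp_coord hf).fderiv]

theorem gradient_sum_comp_coord (hf : ∀ i, HasDerivAt (f i) (f' i (q i)) (q i)) :
    gradient (fun y : EuclideanSpace ℝ (Fin d) => ∑ i, f i (y i)) q =
      WithLp.toLp 2 fun i => f' i (q i) := by
  ext j
  rw [gradient_apply_eq_fderiv, fderiv_sum_comp_coord_single hf]

variable {f'' : Fin d → ℝ}

theorem hess_sum_comp_coord (hf : ∀ i, ∀ᶠ t in 𝓝 (q i), HasDerivAt (f i) (f' i t) t)
    (hf' : ∀ i, HasDerivAt (f' i) (f'' i) (q i)) :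
    hess (fun y : EuclideanSpace ℝ (Fin d) => ∑ i, f i (y i)) q = diagonal f'' := by
  have hnear : ∀ᶠ y in 𝓝 q, ∀ i, HasDerivAt (f i) (f' i (y i)) (y i) :=
    eventually_all.2 fun i =>
      (EuclideanSpace.proj (𝕜 := ℝ) i).continuous.continuousAt.eventually (hf i)
  ext i j
  have hpartial : (fun y => fderiv ℝ (fun y : EuclideanSpace ℝ (Fin d) => ∑ i, f i (y i)) y
      (EuclideanSpace.single j 1)) =ᶠ[𝓝 q] fun y => f' j (y j) := by
    filter_upwards [hnear] with y hy using fderiv_sum_comp_coord_single hy j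
  have hsecond : HasFDerivAt (fun y : EuclideanSpace ℝ (Fin d) => f' j (y j))
      (f'' j • EuclideanSpace.proj (𝕜 := ℝ) j) q :=
    (hf' j).comp_hasFDerivAt q (EuclideanSpace.proj (𝕜 := ℝ) j).hasFDerivAt
  rw [hess, hpartial.fderiv_eq, hsecond.fderiv]
  by_cases hij : i = j
  · subst hij; simp
  · simp [hij, Ne.symm hij]

theorem infLap_sum_comp_coord (hf : ∀ i, ∀ᶠ t in 𝓝 (q i), HasDerivAt (f i) (f' i t) t)
    (hf' : ∀ i, HasDerivAt (f' i) (f'' i) (q i)) :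
    infLap (fun y : EuclideanSpace ℝ (Fin d) => ∑ i, f i (y i)) q =
      (∑ i, f' i (q i) ^ 2 * f'' i) / ∑ i, f' i (q i) ^ 2 := by
  rw [infLap, hess_sum_comp_coord hf hf', gradient_sum_comp_coord fun i => (hf i).self_of_nhds,
    frob_outer_self_diagonal, EuclideanSpace.norm_sq_eq]
  simp

end SeparableSum

section AbsRpow

variable {r t : ℝ}

theorem hasDerivAt_mul_abs_rpow_sub_two_mul (ht : t ≠ 0) :
    HasDerivAt (fun s => r * |s| ^ (r - 2) * s) (r * (r - 1) * |t| ^ (r - 2)) t := by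
  have habs : HasDerivAt (fun s => |s| ^ (r - 2))
      (SignType.sign t * (r - 2) * |t| ^ (r - 2 - 1)) t :=
    (hasDerivAt_abs ht).rpow_const (Or.inl (abs_ne_zero.2 ht))
  refine ((habs.const_mul r).mul (hasDerivAt_id t)).congr_deriv ?_
  rw [Real.rpow_sub_one (abs_ne_zero.2 ht), id]
  linear_combination (norm := skip) (r * (r - 2) * (|t| ^ (r - 2) / |t|)) * sign_mul_self t
  field_simp
  ring

theorem mul_abs_rpow_sub_two_mul_sq_mul (ht : t ≠ 0) :
    (r * |t| ^ (r - 2) * t) ^ 2 * (r * (r - 1) * |t| ^ (r - 2)) =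
      r ^ 3 * (r - 1) * |t| ^ (3 * r - 4) := by
  have hpos : 0 < |t| := abs_pos.2 ht
  have hexp : |t| ^ (3 * r - 4) = (|t| ^ (r - 2)) ^ 3 * |t| ^ 2 := by
    rw [← Real.rpow_natCast, ← Real.rpow_mul hpos.le, ← Real.rpow_natCast |t| 2,
      ← Real.rpow_add hpos]
    congr 1
    push_cast
    ring
  rw [hexp]
  linear_combination (r ^ 3 * (r - 1) * (|t| ^ (r - 2)) ^ 3) * (sq_abs t).symm

end AbsRpow

/-- The Aronsson function `u(x,y) = |x|^{4/3} - |y|^{4/3}` is infinity harmonic away from the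
coordinate axes. -/
theorem aronsson_infinity_harmonic (p : EuclideanSpace ℝ (Fin 2))
    (hx : p 0 ≠ 0) (hy : p 1 ≠ 0) :
    infLap (fun q : EuclideanSpace ℝ (Fin 2) => |q 0| ^ ((4 : ℝ) / 3) - |q 1| ^ ((4 : ℝ) / 3))
      p = 0 := by
  set r : ℝ := 4 / 3
  let σ : Fin 2 → ℝ := ![1, -1]
  have hp : ∀ i, p i ≠ 0 := Fin.forall_fin_two.2 ⟨hx, hy⟩
  have hu : (fun q : EuclideanSpace ℝ (Fin 2) => |q 0| ^ r - |q 1| ^ r) =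
      fun q => ∑ i, σ i * |q i| ^ r := by
    funext q
    simp [σ, Fin.sum_univ_two, sub_eq_add_neg]
  have hconst : ∀ t : ℝ, t ≠ 0 →
      (r * |t| ^ (r - 2) * t) ^ 2 * (r * (r - 1) * |t| ^ (r - 2)) = 64 / 81 := by
    intro t ht
    rw [mul_abs_rpow_sub_two_mul_sq_mul ht]
    norm_num [r]
  rw [hu, infLap_sum_comp_coord (f := fun i t => σ i * |t| ^ r)
    (f' := fun i t => σ i * (r * |t| ^ (r - 2) * t))
    (f'' := fun i => σ i * (r * (r - 1) * |p i| ^ (r - 2)))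
    (fun i => Eventually.of_forall fun t => (hasDerivAt_abs_rpow t (by norm_num)).const_mul _)
    (fun i => (hasDerivAt_mul_abs_rpow_sub_two_mul (hp i)).const_mul _)]
  simp only [σ, Fin.sum_univ_two, Matrix.cons_val_zero, Matrix.cons_val_one]
  refine div_eq_zero_iff.2 (Or.inl ?_)
  linear_combination hconst _ hx - hconst _ hy

end
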